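/- arXiv:math/9811100 — 2 statements merged into one kernel-verified Lean document; each statement's English description precedes it below -/
import Mathlib

section
/- Let n ≥ 2 and set r = n−1. Then r is the smallest positive integer m with the property that for every permutation (i_1, …, i_r) of the indices 1, …, r, the concatenation of m copies of (i_1, …, i_r) contains, as a (not necessarily contiguous) subsequence, a reduced word for the longest element w₀ of the symmetric group S_n. -/
/-- The adjacent transposition `s_{k+1} = (k+1, k+2)` of `S_n` (0-indexed: it swaps
positions `k` and `k+1`), for a letter `k : Fin (n-1)`. -/
def adjTransposition (n : ℕ) (k : Fin (n - 1)) : Equiv.Perm (Fin n) :=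
  Equiv.swap ⟨k.val, by have := k.isLt; omega⟩ ⟨k.val + 1, by have := k.isLt; omega⟩

/-- A word in the letters `{1,…,n-1}` (encoded as `Fin (n-1)`) is a reduced word for the
longest element `w₀` of `S_n` (the reversal permutation) if the product of the
corresponding adjacent transpositions is `w₀` and its length is `ℓ(w₀) = n(n-1)/2`. -/
def IsReducedWordW0 (n : ℕ) (l : List (Fin (n - 1))) : Prop :=
  (l.map (adjTransposition n)).prod = (Fin.revPerm : Equiv.Perm (Fin n)) ∧
    l.length = n * (n - 1) / 2

namespace Stmt13Aux

open Finset

variable {n : ℕ}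

/-- Position `k` as an element of `Fin n`. -/
def pos0 (k : Fin (n - 1)) : Fin n := ⟨k.val, by have := k.isLt; omega⟩

/-- Position `k+1` as an element of `Fin n`. -/
def pos1 (k : Fin (n - 1)) : Fin n := ⟨k.val + 1, by have := k.isLt; omega⟩

lemma adjT_eq (k : Fin (n - 1)) :
    adjTransposition n k = Equiv.swap (pos0 k) (pos1 k) := rfl

lemma pos0_ne_pos1 (k : Fin (n - 1)) : pos0 k ≠ pos1 k := by
  simp [pos0, pos1, Fin.ext_iff]

lemma adjT_apply_val (k : Fin (n - 1)) (x : Fin n) :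
    ((adjTransposition n k) x).val =
      if x.val = k.val then k.val + 1 else if x.val = k.val + 1 then k.val else x.val := by
  rw [adjT_eq]
  rcases eq_or_ne x (pos0 k) with rfl | h0
  · simp [Equiv.swap_apply_left, pos0, pos1]
  · rcases eq_or_ne x (pos1 k) with rfl | h1
    · simp only [Equiv.swap_apply_right, pos0, pos1]
      have : k.val + 1 ≠ k.val := by omega
      simp [this]
    · rw [Equiv.swap_apply_of_ne_of_ne h0 h1]
      have e0 : x.val ≠ k.val := fun h => h0 (Fin.ext h)
      have e1 : x.val ≠ k.val + 1 := fun h => h1 (Fin.ext h)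
      simp [e0, e1]

/-- One greedy comparator step. -/
def gstep (n : ℕ) (a : Equiv.Perm (Fin n)) (k : Fin (n - 1)) : Equiv.Perm (Fin n) :=
  if (a (pos1 k)).val < (a (pos0 k)).val then a * adjTransposition n k else a

/-- Run the greedy process over a word. -/
def run (n : ℕ) (a : Equiv.Perm (Fin n)) (w : List (Fin (n - 1))) : Equiv.Perm (Fin n) :=
  w.foldl (gstep n) a

/-- The letters actually used by the greedy process. -/
def chosen (n : ℕ) : Equiv.Perm (Fin n) → List (Fin (n - 1)) → List (Fin (n - 1))
  | _, [] => []
  | a, k :: w =>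
      if (a (pos1 k)).val < (a (pos0 k)).val then k :: chosen n (gstep n a k) w
      else chosen n (gstep n a k) w

lemma run_nil (a : Equiv.Perm (Fin n)) : run n a [] = a := rfl

lemma run_cons (a : Equiv.Perm (Fin n)) (k : Fin (n-1)) (w : List (Fin (n-1))) :
    run n a (k :: w) = run n (gstep n a k) w := rfl

lemma run_append (a : Equiv.Perm (Fin n)) (w₁ w₂ : List (Fin (n-1))) :
    run n a (w₁ ++ w₂) = run n (run n a w₁) w₂ :=
  List.foldl_append ..

lemma chosen_sublist (a : Equiv.Perm (Fin n)) (w : List (Fin (n-1))) :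
    (chosen n a w).Sublist w := by
  induction w generalizing a with
  | nil => simp [chosen]
  | cons k w ih =>
      rw [chosen]
      split
      · exact (ih _).cons₂ k
      · exact (ih _).cons k

lemma mul_chosen_prod (a : Equiv.Perm (Fin n)) (w : List (Fin (n-1))) :
    a * ((chosen n a w).map (adjTransposition n)).prod = run n a w := by
  induction w generalizing a with
  | nil => simp [chosen, run_nil]
  | cons k w ih =>
      rw [chosen, run_cons]
      by_cases h : (a (pos1 k)).val < (a (pos0 k)).val
      · rw [if_pos h, List.map_cons, List.prod_cons, ← mul_assoc]
        have : a * adjTransposition n k = gstep n a k := by rw [gstep, if_pos h]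
        rw [this, ih]
      · rw [if_neg h]
        have hg : gstep n a k = a := by rw [gstep, if_neg h]
        rw [hg, ih]


/-- Number of positions `≥ q` holding a value `≥ c`. -/
def Ncount (c q : ℕ) (a : Equiv.Perm (Fin n)) : ℕ :=
  (univ.filter fun p : Fin n => q ≤ p.val ∧ c ≤ (a p).val).card

lemma Ncount_anti (a : Equiv.Perm (Fin n)) {q q' : ℕ} (h : q ≤ q') (c : ℕ) :
    Ncount c q' a ≤ Ncount c q a := by
  apply card_le_card
  intro p hp
  simp only [mem_filter, mem_univ, true_and] at hp ⊢
  exact ⟨le_trans h hp.1, hp.2⟩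

lemma Ncount_split (c q : ℕ) (hq : q < n) (a : Equiv.Perm (Fin n)) :
    Ncount c q a = (if c ≤ (a ⟨q, hq⟩).val then 1 else 0) + Ncount c (q+1) a := by
  classical
  have hset : ∀ p : Fin n, (q ≤ p.val ∧ c ≤ (a p).val) ↔
      (p = ⟨q, hq⟩ ∧ c ≤ (a ⟨q, hq⟩).val) ∨ (q + 1 ≤ p.val ∧ c ≤ (a p).val) := by
    intro p
    constructor
    · rintro ⟨h1, h2⟩
      rcases eq_or_lt_of_le h1 with he | hl
      · left; have : p = ⟨q, hq⟩ := Fin.ext he.symm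
        exact ⟨this, this ▸ h2⟩
      · right; exact ⟨hl, h2⟩
    · rintro (⟨rfl, h2⟩ | ⟨h1, h2⟩)
      · exact ⟨le_refl _, h2⟩
      · exact ⟨by omega, h2⟩
  rcases le_or_gt c ((a ⟨q, hq⟩).val) with hc | hc
  · rw [if_pos hc]
    have : (univ.filter fun p : Fin n => q ≤ p.val ∧ c ≤ (a p).val)
        = insert (⟨q, hq⟩ : Fin n) (univ.filter fun p : Fin n => q+1 ≤ p.val ∧ c ≤ (a p).val) := by
      ext p
      simp only [mem_filter, mem_insert, mem_univ, true_and, hset p]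
      constructor
      · rintro (⟨rfl, _⟩ | h) ; · exact Or.inl rfl
        · exact Or.inr h
      · rintro (rfl | h); · exact Or.inl ⟨rfl, hc⟩
        · exact Or.inr h
    rw [Ncount, this, card_insert_of_notMem]
    · rw [Ncount]; omega
    · simp only [mem_filter, mem_univ, true_and]
      rintro ⟨h1, _⟩; omega
  · rw [if_neg (by omega), zero_add, Ncount, Ncount]
    congr 1
    ext p
    simp only [mem_filter, mem_univ, true_and, hset p]
    constructor
    · rintro (⟨rfl, h2⟩ | h)
      · omega
      · exact h
    · exact Or.inr
  
lemma mul_adjT_apply_of_high (a : Equiv.Perm (Fin n)) (k : Fin (n-1)) (p : Fin n)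
    (hp : k.val + 2 ≤ p.val) : (a * adjTransposition n k) p = a p := by
  have h0 : p ≠ pos0 k := by simp [pos0, Fin.ext_iff]; omega
  have h1 : p ≠ pos1 k := by simp [pos1, Fin.ext_iff]; omega
  simp only [Equiv.Perm.mul_apply, adjT_eq]
  rw [Equiv.swap_apply_of_ne_of_ne h0 h1]

lemma Ncount_mul_adjT_high (c q : ℕ) (k : Fin (n-1)) (hq : k.val + 2 ≤ q)
    (a : Equiv.Perm (Fin n)) :
    Ncount c q (a * adjTransposition n k) = Ncount c q a := by
  rw [Ncount, Ncount]
  congr 1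
  ext p
  simp only [mem_filter, mem_univ, true_and]
  constructor
  · rintro ⟨h1, h2⟩
    rw [mul_adjT_apply_of_high a k p (by omega)] at h2
    exact ⟨h1, h2⟩
  · rintro ⟨h1, h2⟩
    rw [mul_adjT_apply_of_high a k p (by omega)]
    exact ⟨h1, h2⟩

lemma Ncount_le_gstep (c q : ℕ) (a : Equiv.Perm (Fin n)) (k : Fin (n-1)) :
    Ncount c q a ≤ Ncount c q (gstep n a k) := by
  rw [gstep]
  split
  case isFalse => exact le_refl _
  case isTrue h =>
  set b := a * adjTransposition n k with hb
  have hbp0 : b (pos0 k) = a (pos1 k) := by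
    rw [hb]; simp only [Equiv.Perm.mul_apply, adjT_eq, Equiv.swap_apply_left]
  have hbp1 : b (pos1 k) = a (pos0 k) := by
    rw [hb]; simp only [Equiv.Perm.mul_apply, adjT_eq, Equiv.swap_apply_right]
  have hoff : ∀ p : Fin n, p ≠ pos0 k → p ≠ pos1 k → b p = a p := by
    intro p h0 h1
    rw [hb]; simp only [Equiv.Perm.mul_apply, adjT_eq]
    rw [Equiv.swap_apply_of_ne_of_ne h0 h1]
  have key : ∀ e : Equiv.Perm (Fin n), Ncount c q e =
      (if q ≤ (pos0 k).val ∧ c ≤ (e (pos0 k)).val then 1 else 0) +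
      ((if q ≤ (pos1 k).val ∧ c ≤ (e (pos1 k)).val then 1 else 0) +
        ∑ p ∈ (univ.erase (pos0 k)).erase (pos1 k),
          (if q ≤ p.val ∧ c ≤ (e p).val then 1 else 0)) := by
    intro e
    rw [Ncount, card_filter]
    rw [← Finset.add_sum_erase _ _ (mem_univ (pos0 k))]
    congr 1
    rw [← Finset.add_sum_erase _ _ (by
      exact mem_erase.mpr ⟨(pos0_ne_pos1 k).symm, mem_univ _⟩)]
  rw [key a, key b, hbp0, hbp1]
  have hsum : ∑ p ∈ (univ.erase (pos0 k)).erase (pos1 k),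
        (if q ≤ p.val ∧ c ≤ (a p).val then 1 else 0) =
      ∑ p ∈ (univ.erase (pos0 k)).erase (pos1 k),
        (if q ≤ p.val ∧ c ≤ (b p).val then 1 else 0) := by
    apply Finset.sum_congr rfl
    intro p hp
    simp only [mem_erase] at hp
    rw [hoff p hp.2.1 hp.1]
  rw [← hsum]
  have hv : (pos0 k).val = k.val := rfl
  have hv1 : (pos1 k).val = k.val + 1 := rfl
  rw [hv, hv1]
  have h' : (a (pos1 k)).val < (a (pos0 k)).val := h
  set u := (a (pos0 k)).val
  set v := (a (pos1 k)).val
  split_ifs <;> omega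

lemma Ncount_le_run (c q : ℕ) (a : Equiv.Perm (Fin n)) (w : List (Fin (n-1))) :
    Ncount c q a ≤ Ncount c q (run n a w) := by
  induction w generalizing a with
  | nil => exact le_refl _
  | cons k w ih => exact le_trans (Ncount_le_gstep c q a k) (ih _)

lemma fire (c : ℕ) (k : Fin (n-1)) (a : Equiv.Perm (Fin n)) (j : ℕ)
    (h1 : j ≤ Ncount c k.val a) (h2 : j - 1 ≤ Ncount c (k.val + 2) a) :
    j ≤ Ncount c (k.val + 1) (gstep n a k) := by
  have hk : k.val < n - 1 := k.isLt
  have hkn : k.val < n := by omega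
  have hkn1 : k.val + 1 < n := by omega
  rcases le_or_gt j (Ncount c (k.val + 1) a) with hle | hlt
  · calc j ≤ Ncount c (k.val+1) a := hle
      _ ≤ _ := Ncount_le_gstep _ _ _ _
  · have hs0 := Ncount_split c k.val hkn a
    have hs1 := Ncount_split c (k.val + 1) hkn1 a
    rw [show k.val + 1 + 1 = k.val + 2 from rfl] at hs1
    have hp0 : (⟨k.val, hkn⟩ : Fin n) = pos0 k := rfl
    have hp1 : (⟨k.val + 1, hkn1⟩ : Fin n) = pos1 k := rfl
    rw [hp0] at hs0
    rw [hp1] at hs1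
    have hc0 : c ≤ (a (pos0 k)).val := by
      by_contra hc
      rw [if_neg hc] at hs0
      omega
    have hc1 : ¬ c ≤ (a (pos1 k)).val := by
      by_contra hc
      rw [if_pos hc] at hs1
      omega
    have hcond : (a (pos1 k)).val < (a (pos0 k)).val := by omega
    rw [gstep, if_pos hcond]
    set b := a * adjTransposition n k with hb
    have hsb := Ncount_split c (k.val + 1) hkn1 b
    rw [hp1] at hsb
    have hbp1 : b (pos1 k) = a (pos0 k) := by
      rw [hb]; simp only [Equiv.Perm.mul_apply, adjT_eq, Equiv.swap_apply_right]
    rw [hbp1, if_pos hc0] at hsb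
    rw [hsb]
    have h22 : Ncount c (k.val + 1 + 1) b = Ncount c (k.val + 2) a := by
      rw [show k.val + 1 + 1 = k.val + 2 from rfl]
      exact Ncount_mul_adjT_high c (k.val+2) k (le_refl _) a
    rw [h22]
    omega


lemma card_filter_comp {α : Type*} [Fintype α] [DecidableEq α] (e : Equiv.Perm α)
    (P : α → Prop) [DecidablePred P] :
    (univ.filter fun x => P (e x)).card = (univ.filter P).card := by
  apply Finset.card_bij (fun x _ => e x)
  · intro a ha
    simp only [mem_filter, mem_univ, true_and] at ha ⊢
    exact ha
  · intro a _ b _ hab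
    exact e.injective hab
  · intro b hb
    refine ⟨e.symm b, ?_, by simp⟩
    simp only [mem_filter, mem_univ, true_and, Equiv.apply_symm_apply] at hb ⊢
    exact hb

lemma card_val_interval (q r : ℕ) (hr : r ≤ n) :
    (univ.filter fun p : Fin n => q ≤ p.val ∧ p.val < r).card = r - q := by
  rw [← Nat.card_Ico q r]
  apply Finset.card_bij (fun (p : Fin n) _ => p.val)
  · intro a ha
    simp only [mem_filter, mem_univ, true_and] at ha
    exact Finset.mem_Ico.mpr ha
  · intro a _ b _ hab
    exact Fin.ext hab
  · intro b hb
    rw [Finset.mem_Ico] at hb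
    exact ⟨⟨b, by omega⟩, by simp only [mem_filter, mem_univ, true_and]; exact hb, rfl⟩

lemma Ncount_rev (c q : ℕ) : Ncount c q (Fin.revPerm : Equiv.Perm (Fin n)) = (n - c) - q := by
  rw [Ncount]
  have : ∀ p : Fin n, (q ≤ p.val ∧ c ≤ ((Fin.revPerm : Equiv.Perm (Fin n)) p).val) ↔
      (q ≤ p.val ∧ p.val < n - c) := by
    intro p
    have h1 : ((Fin.revPerm : Equiv.Perm (Fin n)) p).val = n - (p.val + 1) := by
      simp [Fin.revPerm, Fin.val_rev]
    rw [h1]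
    have := p.isLt
    omega
  rw [Finset.filter_congr (fun x _ => this x)]
  rw [card_val_interval _ _ (by omega)]

lemma card_ge_c (a : Equiv.Perm (Fin n)) (c : ℕ) :
    (univ.filter fun p : Fin n => c ≤ (a p).val).card = n - c := by
  rw [card_filter_comp a (fun p : Fin n => c ≤ p.val)]
  have : ∀ p : Fin n, (c ≤ p.val) ↔ (c ≤ p.val ∧ p.val < n) :=
    fun p => ⟨fun h => ⟨h, p.isLt⟩, fun h => h.1⟩
  rw [Finset.filter_congr (fun x _ => this x), card_val_interval c n (le_refl n)]

lemma eq_one_of_Ncount (a : Equiv.Perm (Fin n)) (h : ∀ c : ℕ, c < n → n - c ≤ Ncount c c a) :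
    a = 1 := by
  have hle : ∀ p : Fin n, (a p).val ≤ p.val := by
    intro p
    set c := (a p).val with hc
    have hcn : c < n := (a p).isLt
    have hS : (univ.filter fun x : Fin n => c ≤ x.val ∧ c ≤ (a x).val)
        ⊆ (univ.filter fun x : Fin n => c ≤ (a x).val) := by
      intro x hx
      simp only [mem_filter, mem_univ, true_and] at hx ⊢
      exact hx.2
    have hcard : (univ.filter fun x : Fin n => c ≤ (a x).val).card ≤
        (univ.filter fun x : Fin n => c ≤ x.val ∧ c ≤ (a x).val).card := by
      rw [card_ge_c a c]
      exact h c hcn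
    have heq := Finset.eq_of_subset_of_card_le hS hcard
    have hp : p ∈ (univ.filter fun x : Fin n => c ≤ (a x).val) := by
      simp only [mem_filter, mem_univ, true_and]
      exact le_of_eq hc
    rw [← heq] at hp
    simp only [mem_filter, mem_univ, true_and] at hp
    exact hp.1
  have hsum : ∑ p : Fin n, (a p).val = ∑ p : Fin n, p.val :=
    Equiv.sum_comp a (fun p : Fin n => p.val)
  have hall := (Finset.sum_eq_sum_iff_of_le (fun i _ => hle i)).mp hsum
  apply Equiv.ext
  intro p
  exact Fin.ext (hall p (mem_univ p))

lemma main_claim (L : List (Fin (n-1))) (hL : ∀ p : Fin (n-1), p ∈ L) (c : ℕ)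
    (m k : ℕ) (hk : k ≤ n - c) :
    k ≤ Ncount c (min (n - k) (n - c + m + 1 - 2*k))
      (run n Fin.revPerm (List.flatten (List.replicate m L))) := by
  induction m generalizing k with
  | zero =>
      simp only [List.replicate, List.flatten_nil, run_nil]
      rw [Ncount_rev]
      rcases Nat.eq_zero_or_pos k with rfl | hk1
      · omega
      · omega
  | succ m ih =>
      rcases Nat.eq_zero_or_pos k with rfl | hk1
      · exact Nat.zero_le _
      have hrun : run n Fin.revPerm (List.flatten (List.replicate (m+1) L))
          = run n (run n Fin.revPerm (List.flatten (List.replicate m L))) L := by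
        rw [List.replicate_succ', List.flatten_append, run_append]
        simp [run_append]
      set A := run n Fin.revPerm (List.flatten (List.replicate m L)) with hA
      rw [hrun]
      set qn := min (n - k) (n - c + (m+1) + 1 - 2*k) with hqn
      set qo := min (n - k) (n - c + m + 1 - 2*k) with hqo
      rcases le_or_gt qn qo with hle | hlt
      · calc k ≤ Ncount c qo A := ih k hk
          _ ≤ Ncount c qn A := Ncount_anti A hle c
          _ ≤ Ncount c qn (run n A L) := Ncount_le_run c qn A L
      · -- here qn = qo + 1, qn = n - c + m + 2 - 2k ≤ n - k, qn ≥ 1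
        have hfacts : qn = qo + 1 ∧ qn = n - c + m + 2 - 2*k ∧ qn ≤ n - k ∧ 1 ≤ qn := by
          omega
        have hp : qo < n - 1 := by omega
        set kp : Fin (n-1) := ⟨qo, hp⟩ with hkp
        obtain ⟨L₁, L₂, hLsplit⟩ := List.append_of_mem (hL kp)
        have hrun2 : run n A L = run n (gstep n (run n A L₁) kp) L₂ := by
          rw [hLsplit, run_append, run_cons]
        set a' := run n A L₁ with ha'
        have f1 : k ≤ Ncount c kp.val a' := by
          calc k ≤ Ncount c qo A := ih k hk
            _ ≤ Ncount c qo a' := Ncount_le_run c qo A L₁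
        have f2 : k - 1 ≤ Ncount c (kp.val + 2) a' := by
          have hIH := ih (k-1) (by omega)
          have hbound : kp.val + 2 ≤ min (n - (k-1)) (n - c + m + 1 - 2*(k-1)) := by
            simp only [hkp]
            omega
          calc k - 1 ≤ Ncount c (min (n - (k-1)) (n - c + m + 1 - 2*(k-1))) A := hIH
            _ ≤ Ncount c (kp.val + 2) A := Ncount_anti A hbound c
            _ ≤ Ncount c (kp.val + 2) a' := Ncount_le_run _ _ A L₁
        have f3 := fire c kp a' k f1 f2
        have hq : kp.val + 1 = qn := by simp only [hkp]; omega
        rw [hq] at f3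
        calc k ≤ Ncount c qn (gstep n a' kp) := f3
          _ ≤ Ncount c qn (run n (gstep n a' kp) L₂) := Ncount_le_run _ _ _ _
          _ = Ncount c qn (run n A L) := by rw [hrun2]

lemma run_sorts (hn : 2 ≤ n) (L : List (Fin (n-1))) (hL : ∀ p : Fin (n-1), p ∈ L) :
    run n Fin.revPerm (List.flatten (List.replicate (n-1) L)) = 1 := by
  apply eq_one_of_Ncount
  intro c hc
  have h := main_claim L hL c (n-1) (n - c) (le_refl _)
  have hmin : min (n - (n - c)) (n - c + (n-1) + 1 - 2*(n - c)) = c := by omega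
  rw [hmin] at h
  exact h


/-- Number of inversions of a permutation viewed as an array. -/
def invN (a : Equiv.Perm (Fin n)) : ℕ :=
  (univ.filter fun p : Fin n × Fin n => p.1 < p.2 ∧ (a p.2).val < (a p.1).val).card

lemma invN_swap (a : Equiv.Perm (Fin n)) (k : Fin (n-1))
    (h : (a (pos1 k)).val < (a (pos0 k)).val) :
    invN (a * adjTransposition n k) + 1 = invN a := by
  classical
  set s := adjTransposition n k with hs
  have hswap : ∀ x : Fin n, s (s x) = x := by
    intro x; rw [hs, adjT_eq]; exact Equiv.swap_apply_self _ _ x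
  have hstep : invN (a * s) =
      (univ.filter fun p : Fin n × Fin n =>
        (s p.1).val < (s p.2).val ∧ (a p.2).val < (a p.1).val).card := by
    rw [invN]
    rw [← card_filter_comp (Equiv.prodCongr s s)
      (fun p : Fin n × Fin n => (s p.1).val < (s p.2).val ∧ (a p.2).val < (a p.1).val)]
    congr 1
    apply Finset.filter_congr
    intro p _
    simp only [Equiv.prodCongr_apply, Prod.map, hswap, Equiv.Perm.mul_apply, Fin.lt_def]
  have hsval : ∀ x : Fin n, (s x).val =
      if x.val = k.val then k.val + 1 else if x.val = k.val + 1 then k.val else x.val := by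
    intro x; rw [hs]; exact adjT_apply_val k x
  have horder : ∀ x y : Fin n, (a y).val < (a x).val →
      ((s x).val < (s y).val ↔ (x.val < y.val ∧ ¬(x.val = k.val ∧ y.val = k.val + 1))) := by
    intro x y hA
    by_cases hyx : x.val = k.val + 1 ∧ y.val = k.val
    · exfalso
      have hx : x = pos1 k := Fin.ext hyx.1
      have hy : y = pos0 k := Fin.ext hyx.2
      rw [hx, hy] at hA
      omega
    · rw [hsval x, hsval y]
      split_ifs <;> omega
  have hkey : (univ.filter fun p : Fin n × Fin n =>
        (s p.1).val < (s p.2).val ∧ (a p.2).val < (a p.1).val) =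
      (univ.filter fun p : Fin n × Fin n =>
        p.1 < p.2 ∧ (a p.2).val < (a p.1).val).erase (pos0 k, pos1 k) := by
    ext ⟨x, y⟩
    simp only [mem_filter, mem_erase, mem_univ, true_and, ne_eq, Prod.mk.injEq, Fin.lt_def]
    constructor
    · rintro ⟨h1, hA⟩
      have hh := (horder x y hA).mp h1
      refine ⟨?_, hh.1, hA⟩
      rintro ⟨hx, hy⟩
      apply hh.2
      rw [hx, hy]
      exact ⟨rfl, rfl⟩
    · rintro ⟨hne, h1, hA⟩
      refine ⟨(horder x y hA).mpr ⟨h1, ?_⟩, hA⟩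
      rintro ⟨hx, hy⟩
      exact hne ⟨Fin.ext hx, Fin.ext hy⟩
  rw [hstep, hkey, invN, card_erase_of_mem]
  · have hmem : (pos0 k, pos1 k) ∈ (univ.filter fun p : Fin n × Fin n =>
        p.1 < p.2 ∧ (a p.2).val < (a p.1).val) := by
      simp only [mem_filter, mem_univ, true_and]
      exact ⟨by rw [Fin.lt_def]; exact Nat.lt_succ_self _, h⟩
    have hpos : 0 < (univ.filter fun p : Fin n × Fin n =>
        p.1 < p.2 ∧ (a p.2).val < (a p.1).val).card := card_pos.mpr ⟨_, hmem⟩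
    omega
  · simp only [mem_filter, mem_univ, true_and]
    exact ⟨by rw [Fin.lt_def]; exact Nat.lt_succ_self _, h⟩

lemma invN_run (a : Equiv.Perm (Fin n)) (w : List (Fin (n-1))) :
    invN (run n a w) + (chosen n a w).length = invN a := by
  induction w generalizing a with
  | nil => simp [run_nil, chosen]
  | cons k w ih =>
      rw [run_cons, chosen]
      by_cases h : (a (pos1 k)).val < (a (pos0 k)).val
      · rw [if_pos h, List.length_cons]
        have hg : gstep n a k = a * adjTransposition n k := by rw [gstep, if_pos h]
        have := invN_swap a k h
        have hih := ih (gstep n a k)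
        rw [hg] at hih ⊢
        omega
      · rw [if_neg h]
        have hg : gstep n a k = a := by rw [gstep, if_neg h]
        rw [hg] at *
        exact ih a

lemma invN_one : invN (1 : Equiv.Perm (Fin n)) = 0 := by
  rw [invN, Finset.card_eq_zero, Finset.filter_eq_empty_iff]
  rintro ⟨x, y⟩ _
  simp only [Equiv.Perm.one_apply, Fin.lt_def, not_and]
  omega

lemma invN_rev : invN (Fin.revPerm : Equiv.Perm (Fin n)) = n * (n-1) / 2 := by
  classical
  have hcond : ∀ p : Fin n × Fin n,
      (p.1 < p.2 ∧ ((Fin.revPerm : Equiv.Perm (Fin n)) p.2).val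
        < ((Fin.revPerm : Equiv.Perm (Fin n)) p.1).val) ↔ p.1 < p.2 := by
    rintro ⟨x, y⟩
    have hx : ((Fin.revPerm : Equiv.Perm (Fin n)) x).val = n - (x.val + 1) := by
      simp [Fin.revPerm, Fin.val_rev]
    have hy : ((Fin.revPerm : Equiv.Perm (Fin n)) y).val = n - (y.val + 1) := by
      simp [Fin.revPerm, Fin.val_rev]
    simp only [hx, hy, Fin.lt_def]
    have := x.isLt; have := y.isLt
    constructor
    · rintro ⟨h, _⟩; exact h
    · intro h; exact ⟨h, by omega⟩
  rw [invN, Finset.filter_congr (fun x _ => hcond x)]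
  set C := (univ.filter fun p : Fin n × Fin n => p.1 < p.2).card with hC
  have hgt : (univ.filter fun p : Fin n × Fin n => p.2 < p.1).card = C := by
    rw [hC, ← card_filter_comp (Equiv.prodComm (Fin n) (Fin n))
      (fun p : Fin n × Fin n => p.2 < p.1)]
    congr 1
  have hdiag : (univ.filter fun p : Fin n × Fin n => p.1 = p.2).card = n := by
    have himg : (univ.filter fun p : Fin n × Fin n => p.1 = p.2)
        = (univ : Finset (Fin n)).image (fun x => (x, x)) := by
      ext ⟨x, y⟩
      simp only [mem_filter, mem_univ, true_and, mem_image]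
      constructor
      · intro h
        exact ⟨x, by rw [h]⟩
      · rintro ⟨z, hz⟩
        rw [Prod.mk.injEq] at hz
        rw [← hz.1, ← hz.2]
    have hinj : Function.Injective (fun x : Fin n => (x, x)) := by
      intro a b hab
      rw [Prod.mk.injEq] at hab
      exact hab.1
    rw [himg, Finset.card_image_of_injective _ hinj, Finset.card_univ, Fintype.card_fin]
  have hsplit : (univ.filter fun p : Fin n × Fin n => p.1 = p.2).card +
      (univ.filter fun p : Fin n × Fin n => ¬ p.1 = p.2).card =
      (univ : Finset (Fin n × Fin n)).card :=
    Finset.card_filter_add_card_filter_not _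
  have huniv : (univ : Finset (Fin n × Fin n)).card = n * n := by
    simp [Finset.card_univ]
  have hne : (univ.filter fun p : Fin n × Fin n => ¬ p.1 = p.2) =
      (univ.filter fun p : Fin n × Fin n => p.1 < p.2) ∪
      (univ.filter fun p : Fin n × Fin n => p.2 < p.1) := by
    ext p
    simp only [mem_filter, mem_univ, true_and, mem_union]
    constructor
    · intro h; exact lt_or_gt_of_ne h
    · intro h; rcases h with h | h
      · exact ne_of_lt h
      · exact (ne_of_lt h).symm
  have hdisj : Disjoint (univ.filter fun p : Fin n × Fin n => p.1 < p.2)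
      (univ.filter fun p : Fin n × Fin n => p.2 < p.1) := by
    rw [Finset.disjoint_filter]
    intro p _ h1 h2
    exact absurd (lt_trans h1 h2) (lt_irrefl _)
  have hcount : 2 * C + n = n * n := by
    have := Finset.card_union_of_disjoint hdisj
    rw [← hne] at this
    omega
  have h2 : n * (n - 1) = 2 * C := by
    cases n with
    | zero => simp at hcount ⊢; omega
    | succ m =>
        simp only [Nat.succ_sub_one]
        have : (m+1) * (m+1) = (m+1) * m + (m+1) := by ring
        omega
  rw [hC] at h2
  omega


lemma prod_fix (l : List (Fin (n-1))) (cv : ℕ) (hl : ∀ i ∈ l, cv ≤ i.val)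
    (x : Fin n) (hx : x.val < cv) : (l.map (adjTransposition n)).prod x = x := by
  induction l with
  | nil => simp
  | cons i t ih =>
      rw [List.map_cons, List.prod_cons, Equiv.Perm.mul_apply]
      rw [ih (fun j hj => hl j (List.mem_cons_of_mem i hj))]
      have hi : cv ≤ i.val := hl i List.mem_cons_self
      rw [adjT_eq]
      apply Equiv.swap_apply_of_ne_of_ne
      · simp only [pos0, ne_eq, Fin.ext_iff]; omega
      · simp only [pos1, ne_eq, Fin.ext_iff]; omega

lemma prod_inc_le (l : List (Fin (n-1))) (hl : l.Pairwise (· < ·)) (x : Fin n) :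
    ((l.map (adjTransposition n)).prod x).val ≤ x.val + 1 := by
  induction l generalizing x with
  | nil => simp
  | cons i t ih =>
      rw [List.pairwise_cons] at hl
      rw [List.map_cons, List.prod_cons, Equiv.Perm.mul_apply]
      set y := (t.map (adjTransposition n)).prod x with hy
      have hyx : y.val ≤ x.val + 1 := ih hl.2 x
      rw [adjT_apply_val]
      by_cases h0 : y.val = i.val
      · rw [if_pos h0]
        have : i.val ≤ x.val := by
          by_contra hc
          push_neg at hc
          have hfix : (t.map (adjTransposition n)).prod x = x := by
            apply prod_fix t (i.val + 1)
            · intro j hj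
              have := hl.1 j hj
              rw [Fin.lt_def] at this
              omega
            · omega
          rw [← hy] at hfix
          rw [hfix] at h0
          omega
        omega
      · rw [if_neg h0]
        split_ifs with h1 <;> omega

lemma prod_replicate_le (m : ℕ) (l : List (Fin (n-1)))
    (h : l.Sublist (List.flatten (List.replicate m (List.finRange (n-1))))) (x : Fin n) :
    ((l.map (adjTransposition n)).prod x).val ≤ x.val + m := by
  induction m generalizing l x with
  | zero =>
      rw [List.replicate, List.flatten_nil, List.sublist_nil] at h
      subst h
      simp
  | succ m ih =>
      rw [List.replicate_succ, List.flatten_cons, List.sublist_append_iff] at h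
      obtain ⟨l₁, l₂, rfl, h₁, h₂⟩ := h
      rw [List.map_append, List.prod_append, Equiv.Perm.mul_apply]
      have hstep := prod_inc_le l₁ ((List.pairwise_lt_finRange (n-1)).sublist h₁)
        ((l₂.map (adjTransposition n)).prod x)
      have hrest := ih l₂ h₂ x
      omega

end Stmt13Aux

/-- `n - 1` is the smallest positive integer `m` such that for every permutation of the
letters `1,…,n-1`, the concatenation of `m` copies of it contains a reduced word for the
longest element `w₀` of `S_n` as a subsequence. -/
theorem stmt13 (n : ℕ) (hn : 2 ≤ n) :
    IsLeast {m : ℕ | 0 < m ∧ ∀ σ : Equiv.Perm (Fin (n - 1)),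
        ∃ l : List (Fin (n - 1)), IsReducedWordW0 n l ∧
          l.Sublist (List.replicate m (List.ofFn fun k => σ k)).flatten}
      (n - 1) := by
  open Stmt13Aux in
  constructor
  · -- membership
    refine ⟨by omega, fun σ => ?_⟩
    set L := List.ofFn (fun k => σ k) with hLdef
    have hL : ∀ p : Fin (n-1), p ∈ L := by
      intro p
      rw [hLdef, List.mem_ofFn]
      exact ⟨σ⁻¹ p, Equiv.apply_symm_apply σ p⟩
    set W := (List.replicate (n-1) L).flatten with hW
    refine ⟨chosen n Fin.revPerm W, ⟨?_, ?_⟩, chosen_sublist _ _⟩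
    · have hrun : run n Fin.revPerm W = 1 := run_sorts hn L hL
      have hmul := mul_chosen_prod (Fin.revPerm : Equiv.Perm (Fin n)) W
      rw [hrun] at hmul
      have hinv := inv_eq_of_mul_eq_one_right hmul
      rw [← hinv]
      rw [show (Fin.revPerm : Equiv.Perm (Fin n))⁻¹
        = (Fin.revPerm : Equiv.Perm (Fin n)).symm from rfl, Fin.revPerm_symm]
    · have hlen := invN_run (Fin.revPerm : Equiv.Perm (Fin n)) W
      rw [run_sorts hn L hL, invN_one, invN_rev, zero_add] at hlen
      exact hlen
  · -- lower bound
    rintro m ⟨hm, hσ⟩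
    obtain ⟨l, ⟨hprod, _⟩, hsub⟩ := hσ 1
    have hfin : (List.ofFn fun k => (1 : Equiv.Perm (Fin (n-1))) k) = List.finRange (n-1) := by
      rw [show (fun k => (1 : Equiv.Perm (Fin (n-1))) k) = id from rfl, List.ofFn_id]
    rw [hfin] at hsub
    obtain ⟨x, hx0⟩ : ∃ x : Fin n, x.val = 0 := ⟨⟨0, by omega⟩, rfl⟩
    have hle := prod_replicate_le m l hsub x
    rw [hprod] at hle
    have hrev : ((Fin.revPerm : Equiv.Perm (Fin n)) x).val = n - (x.val + 1) := by
      simp [Fin.revPerm, Fin.val_rev]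
    omega
end

section
/- Let n ≥ 2. Define the Demazure step f : S_n × {1, …, n−1} → S_n by f(w, i) = w·s_i if ℓ(w·s_i) > ℓ(w), and f(w, i) = w otherwise. For a word (i_1, …, i_N) in the alphabet {1, …, n−1}, let u be the result of folding f over the word starting from the identity permutation (u = f(…f(f(e, i_1), i_2)…, i_N)). Then u equals the longest element w₀ of S_n if and only if the word (i_1, …, i_N) contains a reduced word for w₀ as a (not necessarily contiguous) subsequence. -/
/-- The length (number of inversions) of a permutation of `Fin n`. -/
def permLength {n : ℕ} (w : Equiv.Perm (Fin n)) : ℕ :=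
  (Finset.univ.filter fun p : Fin n × Fin n => p.1 < p.2 ∧ w p.2 < w p.1).card

/-- The Demazure step: `f(w, i) = w·sᵢ` if `ℓ(w·sᵢ) > ℓ(w)`, and `f(w, i) = w`
otherwise. -/
def demazureStep (n : ℕ) (w : Equiv.Perm (Fin n)) (k : Fin (n - 1)) : Equiv.Perm (Fin n) :=
  if permLength w < permLength (w * adjTransposition n k) then w * adjTransposition n k
  else w

namespace Stmt14

variable {n : ℕ}

/-- position `k` as element of `Fin n` -/
def posA (k : Fin (n-1)) : Fin n := ⟨k.val, by have := k.isLt; omega⟩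
/-- position `k+1` as element of `Fin n` -/
def posB (k : Fin (n-1)) : Fin n := ⟨k.val + 1, by have := k.isLt; omega⟩

lemma adj_eq (k : Fin (n-1)) : adjTransposition n k = Equiv.swap (posA k) (posB k) := rfl

lemma posA_ne_posB (k : Fin (n-1)) : posA k ≠ posB k := by
  simp [posA, posB, Fin.ext_iff]

lemma swap_lt (k : Fin (n-1)) {i j : Fin n} (hij : i < j) (hne : ¬(i = posA k ∧ j = posB k)) :
    Equiv.swap (posA k) (posB k) i < Equiv.swap (posA k) (posB k) j := by
  have hk := k.isLt
  rcases i with ⟨iv, hiv⟩; rcases j with ⟨jv, hjv⟩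
  rw [Fin.lt_def] at hij
  simp only [posA, posB, not_and] at hne
  simp only [Equiv.swap_apply_def, posA, posB]
  split_ifs <;> simp only [Fin.mk.injEq, Fin.lt_def] at * <;> omega

def invSet (w : Equiv.Perm (Fin n)) : Finset (Fin n × Fin n) :=
  Finset.univ.filter fun p => p.1 < p.2 ∧ w p.2 < w p.1

lemma permLength_eq (w : Equiv.Perm (Fin n)) : permLength w = (invSet w).card := rfl

lemma card_erase_eq (w : Equiv.Perm (Fin n)) (k : Fin (n-1)) :
    ((invSet (w * adjTransposition n k)).erase (posA k, posB k)).card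
      = ((invSet w).erase (posA k, posB k)).card := by
  have key : ∀ p : Fin n × Fin n,
      p ∈ (invSet (w * adjTransposition n k)).erase (posA k, posB k) →
      (Equiv.swap (posA k) (posB k) p.1, Equiv.swap (posA k) (posB k) p.2) ∈ (invSet w).erase (posA k, posB k) := by
    rintro ⟨i, j⟩ hp
    rw [Finset.mem_erase] at hp ⊢
    obtain ⟨hne, hmem⟩ := hp
    rw [invSet, Finset.mem_filter] at hmem ⊢
    obtain ⟨-, hij, hinv⟩ := hmem
    have hne' : ¬(i = posA k ∧ j = posB k) := by
      rintro ⟨rfl, rfl⟩; exact hne rfl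
    refine ⟨?_, Finset.mem_univ _, swap_lt k hij hne', hinv⟩
    rintro h
    have h1 : Equiv.swap (posA k) (posB k) i = posA k := congrArg Prod.fst h
    have h2 : Equiv.swap (posA k) (posB k) j = posB k := congrArg Prod.snd h
    have hi2 : i = posB k := by
      have h3 := congrArg (Equiv.swap (posA k) (posB k)) h1
      rwa [Equiv.swap_apply_self, Equiv.swap_apply_left] at h3
    have hj2 : j = posA k := by
      have h3 := congrArg (Equiv.swap (posA k) (posB k)) h2
      rwa [Equiv.swap_apply_self, Equiv.swap_apply_right] at h3
    subst hi2; subst hj2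
    exact absurd hij (by simp [posA, posB, Fin.lt_def])
  have key2 : ∀ p : Fin n × Fin n,
      p ∈ (invSet w).erase (posA k, posB k) →
      (Equiv.swap (posA k) (posB k) p.1, Equiv.swap (posA k) (posB k) p.2) ∈ (invSet (w * adjTransposition n k)).erase (posA k, posB k) := by
    rintro ⟨i, j⟩ hp
    rw [Finset.mem_erase] at hp ⊢
    obtain ⟨hne, hmem⟩ := hp
    rw [invSet, Finset.mem_filter] at hmem ⊢
    obtain ⟨-, hij, hinv⟩ := hmem
    have hne' : ¬(i = posA k ∧ j = posB k) := by
      rintro ⟨rfl, rfl⟩; exact hne rfl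
    refine ⟨?_, Finset.mem_univ _, swap_lt k hij hne', ?_⟩
    · rintro h
      have h1 : Equiv.swap (posA k) (posB k) i = posA k := congrArg Prod.fst h
      have h2 : Equiv.swap (posA k) (posB k) j = posB k := congrArg Prod.snd h
      have hi2 : i = posB k := by
        have h3 := congrArg (Equiv.swap (posA k) (posB k)) h1
        rwa [Equiv.swap_apply_self, Equiv.swap_apply_left] at h3
      have hj2 : j = posA k := by
        have h3 := congrArg (Equiv.swap (posA k) (posB k)) h2
        rwa [Equiv.swap_apply_self, Equiv.swap_apply_right] at h3
      subst hi2; subst hj2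
      exact absurd hij (by simp [posA, posB, Fin.lt_def])
    · show (w * adjTransposition n k) (Equiv.swap (posA k) (posB k) j)
        < (w * adjTransposition n k) (Equiv.swap (posA k) (posB k) i)
      simp only [adj_eq, Equiv.Perm.mul_apply, Equiv.swap_apply_self]
      exact hinv
  refine Finset.card_bij' (fun p _ => (Equiv.swap (posA k) (posB k) p.1, Equiv.swap (posA k) (posB k) p.2)) (fun p _ => (Equiv.swap (posA k) (posB k) p.1, Equiv.swap (posA k) (posB k) p.2))
    key key2 ?_ ?_
  · rintro ⟨i, j⟩ _; simp [Equiv.swap_apply_self]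
  · rintro ⟨i, j⟩ _; simp [Equiv.swap_apply_self]

lemma mem_invSet_mul (w : Equiv.Perm (Fin n)) (k : Fin (n-1)) :
    ((posA k, posB k) ∈ invSet (w * adjTransposition n k)) ↔ w (posA k) < w (posB k) := by
  rw [invSet, Finset.mem_filter]
  simp only [Finset.mem_univ, true_and]
  constructor
  · rintro ⟨-, h⟩
    simpa [adj_eq, Equiv.Perm.mul_apply, Equiv.swap_apply_left, Equiv.swap_apply_right] using h
  · intro h
    refine ⟨by simp [posA, posB, Fin.lt_def], ?_⟩
    simpa [adj_eq, Equiv.Perm.mul_apply, Equiv.swap_apply_left, Equiv.swap_apply_right] using h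

lemma mem_invSet_self (w : Equiv.Perm (Fin n)) (k : Fin (n-1)) :
    ((posA k, posB k) ∈ invSet w) ↔ w (posB k) < w (posA k) := by
  rw [invSet, Finset.mem_filter]
  simp only [Finset.mem_univ, true_and]
  exact ⟨fun h => h.2, fun h => ⟨by simp [posA, posB, Fin.lt_def], h⟩⟩

lemma permLength_mul_of_asc {w : Equiv.Perm (Fin n)} (k : Fin (n-1))
    (h : w (posA k) < w (posB k)) :
    permLength (w * adjTransposition n k) = permLength w + 1 := by
  have h1 := card_erase_eq w k
  have h2 : (posA k, posB k) ∈ invSet (w * adjTransposition n k) := (mem_invSet_mul w k).2 h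
  have h3 : (posA k, posB k) ∉ invSet w := by
    rw [mem_invSet_self]; exact fun hc => absurd h (not_lt.2 hc.le)
  have h4 := Finset.card_erase_add_one h2
  rw [Finset.erase_eq_of_notMem h3] at h1
  rw [permLength_eq, permLength_eq]
  omega

lemma permLength_mul_of_desc {w : Equiv.Perm (Fin n)} (k : Fin (n-1))
    (h : w (posB k) < w (posA k)) :
    permLength (w * adjTransposition n k) + 1 = permLength w := by
  have h1 := card_erase_eq w k
  have h2 : (posA k, posB k) ∉ invSet (w * adjTransposition n k) := by
    rw [mem_invSet_mul]; exact fun hc => absurd h (not_lt.2 hc.le)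
  have h3 : (posA k, posB k) ∈ invSet w := (mem_invSet_self w k).2 h
  have h4 := Finset.card_erase_add_one h3
  rw [Finset.erase_eq_of_notMem h2] at h1
  rw [permLength_eq, permLength_eq]
  omega

lemma apply_posA_ne_posB (w : Equiv.Perm (Fin n)) (k : Fin (n-1)) :
    w (posA k) ≠ w (posB k) := fun h => posA_ne_posB k (w.injective h)

lemma demazureStep_eq (w : Equiv.Perm (Fin n)) (k : Fin (n-1)) :
    demazureStep n w k = if w (posA k) < w (posB k) then w * adjTransposition n k else w := by
  unfold demazureStep
  rcases lt_trichotomy (w (posA k)) (w (posB k)) with h | h | h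
  · rw [if_pos h, if_pos (by rw [permLength_mul_of_asc k h]; omega)]
  · exact absurd h (apply_posA_ne_posB w k)
  · rw [if_neg (not_lt.2 h.le), if_neg (by have := permLength_mul_of_desc k h; omega)]

/-! ### The rank matrix and dominance order -/

def rmat (w : Equiv.Perm (Fin n)) (i j : ℕ) : ℕ :=
  (Finset.univ.filter fun x : Fin n => x.val < i ∧ j ≤ (w x).val).card

lemma rmat_succ (w : Equiv.Perm (Fin n)) {i : ℕ} (hi : i < n) (j : ℕ) :
    rmat w (i+1) j = rmat w i j + (if j ≤ (w ⟨i, hi⟩).val then 1 else 0) := by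
  unfold rmat
  rw [Finset.card_filter, Finset.card_filter]
  have hsplit : ∀ x : Fin n,
      (if x.val < i + 1 ∧ j ≤ (w x).val then 1 else 0)
        = (if x.val < i ∧ j ≤ (w x).val then 1 else 0)
          + (if x = ⟨i, hi⟩ then (if j ≤ (w x).val then 1 else 0) else 0) := by
    intro x
    by_cases hx : x = ⟨i, hi⟩
    · subst hx; simp
    · have hxv : x.val ≠ i := fun hc => hx (Fin.ext hc)
      rw [if_neg hx]
      split_ifs <;> omega
  rw [Finset.sum_congr rfl fun x _ => hsplit x, Finset.sum_add_distrib,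
    Finset.sum_ite_eq' Finset.univ (⟨i, hi⟩ : Fin n)]
  simp

lemma swap_val_lt (k : Fin (n-1)) (x : Fin n) {i : ℕ} (hik : i ≠ k.val + 1) :
    ((Equiv.swap (posA k) (posB k) x).val < i ↔ x.val < i) := by
  rcases eq_or_ne x (posA k) with rfl | hxa
  · rw [Equiv.swap_apply_left]
    show (posB k).val < i ↔ (posA k).val < i
    simp only [posA, posB]; omega
  rcases eq_or_ne x (posB k) with rfl | hxb
  · rw [Equiv.swap_apply_right]
    show (posA k).val < i ↔ (posB k).val < i
    simp only [posA, posB]; omega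
  · rw [Equiv.swap_apply_of_ne_of_ne hxa hxb]

lemma rmat_mul_ne (w : Equiv.Perm (Fin n)) (k : Fin (n-1)) {i : ℕ} (hik : i ≠ k.val + 1)
    (j : ℕ) : rmat (w * adjTransposition n k) i j = rmat w i j := by
  unfold rmat
  refine Finset.card_bij' (fun x _ => Equiv.swap (posA k) (posB k) x)
    (fun x _ => Equiv.swap (posA k) (posB k) x) ?_ ?_ ?_ ?_
  · intro x hx
    rw [Finset.mem_filter] at hx ⊢
    refine ⟨Finset.mem_univ _, (swap_val_lt k x hik).2 hx.2.1, ?_⟩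
    have := hx.2.2
    simpa [adj_eq, Equiv.Perm.mul_apply] using this
  · intro x hx
    rw [Finset.mem_filter] at hx ⊢
    refine ⟨Finset.mem_univ _, (swap_val_lt k x hik).2 hx.2.1, ?_⟩
    show j ≤ ((w * adjTransposition n k) (Equiv.swap (posA k) (posB k) x)).val
    simpa [adj_eq, Equiv.Perm.mul_apply, Equiv.swap_apply_self] using hx.2.2
  · intro x _; simp [Equiv.swap_apply_self]
  · intro x _; simp [Equiv.swap_apply_self]

lemma posA_lt (k : Fin (n-1)) : k.val < n := by have := k.isLt; omega
lemma posB_lt (k : Fin (n-1)) : k.val + 1 < n := by have := k.isLt; omega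

lemma mk_posA (k : Fin (n-1)) : (⟨k.val, posA_lt k⟩ : Fin n) = posA k := rfl
lemma mk_posB (k : Fin (n-1)) : (⟨k.val + 1, posB_lt k⟩ : Fin n) = posB k := rfl

lemma rmat_k1 (w : Equiv.Perm (Fin n)) (k : Fin (n-1)) (j : ℕ) :
    rmat w (k.val + 1) j = rmat w k.val j + (if j ≤ (w (posA k)).val then 1 else 0) := by
  rw [rmat_succ w (posA_lt k) j, mk_posA]

lemma rmat_mul_k1 (w : Equiv.Perm (Fin n)) (k : Fin (n-1)) (j : ℕ) :
    rmat (w * adjTransposition n k) (k.val + 1) j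
      = rmat w k.val j + (if j ≤ (w (posB k)).val then 1 else 0) := by
  rw [rmat_succ _ (posA_lt k) j, mk_posA, rmat_mul_ne w k (by omega) j]
  have hap : ((w * adjTransposition n k) (posA k)) = w (posB k) := by
    simp [adj_eq, Equiv.Perm.mul_apply, Equiv.swap_apply_left]
  rw [hap]

lemma rmat_k2 (w : Equiv.Perm (Fin n)) (k : Fin (n-1)) (j : ℕ) :
    rmat w (k.val + 2) j = rmat w k.val j + (if j ≤ (w (posA k)).val then 1 else 0)
      + (if j ≤ (w (posB k)).val then 1 else 0) := by
  rw [show k.val + 2 = (k.val + 1) + 1 by omega, rmat_succ w (posB_lt k) j, mk_posB,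
    rmat_k1]

/-- Dominance order (the Bruhat order on `S_n`, in its rank-matrix formulation). -/
def Dom (v w : Equiv.Perm (Fin n)) : Prop := ∀ i j, rmat v i j ≤ rmat w i j

lemma dom_refl (w : Equiv.Perm (Fin n)) : Dom w w := fun _ _ => le_rfl

lemma dom_trans {u v w : Equiv.Perm (Fin n)} (h1 : Dom u v) (h2 : Dom v w) : Dom u w :=
  fun i j => (h1 i j).trans (h2 i j)

lemma dom_mul_of_asc {w : Equiv.Perm (Fin n)} (k : Fin (n-1))
    (h : w (posA k) < w (posB k)) : Dom w (w * adjTransposition n k) := by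
  intro i j
  rcases eq_or_ne i (k.val + 1) with rfl | hi
  · rw [rmat_mul_k1, rmat_k1]
    have hv : (w (posA k)).val < (w (posB k)).val := h
    split_ifs <;> omega
  · rw [rmat_mul_ne w k hi]

lemma dom_mul_of_desc {w : Equiv.Perm (Fin n)} (k : Fin (n-1))
    (h : w (posB k) < w (posA k)) : Dom (w * adjTransposition n k) w := by
  intro i j
  rcases eq_or_ne i (k.val + 1) with rfl | hi
  · rw [rmat_mul_k1, rmat_k1]
    have hv : (w (posB k)).val < (w (posA k)).val := h
    split_ifs <;> omega
  · rw [rmat_mul_ne w k hi]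

lemma dom_mul_asc_asc {v w : Equiv.Perm (Fin n)} (k : Fin (n-1)) (hd : Dom v w)
    (hv : v (posA k) < v (posB k)) (hw : w (posA k) < w (posB k)) :
    Dom (v * adjTransposition n k) (w * adjTransposition n k) := by
  intro i j
  rcases eq_or_ne i (k.val + 1) with rfl | hi
  · rw [rmat_mul_k1, rmat_mul_k1]
    have h1 := hd k.val j
    have h2 := hd (k.val + 2) j
    rw [rmat_k2, rmat_k2] at h2
    have hv' : (v (posA k)).val < (v (posB k)).val := hv
    have hw' : (w (posA k)).val < (w (posB k)).val := hw
    split_ifs at h2 ⊢ <;> omega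
  · rw [rmat_mul_ne v k hi, rmat_mul_ne w k hi]; exact hd i j

lemma dom_lift {v w : Equiv.Perm (Fin n)} (k : Fin (n-1)) (hd : Dom v w)
    (hv : v (posA k) < v (posB k)) (hw : w (posB k) < w (posA k)) :
    Dom (v * adjTransposition n k) w := by
  intro i j
  rcases eq_or_ne i (k.val + 1) with rfl | hi
  · rw [rmat_mul_k1, rmat_k1]
    have h1 := hd k.val j
    have h2 := hd (k.val + 2) j
    rw [rmat_k2, rmat_k2] at h2
    have hv' : (v (posA k)).val < (v (posB k)).val := hv
    have hw' : (w (posB k)).val < (w (posA k)).val := hw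
    split_ifs at h2 ⊢ <;> omega
  · rw [rmat_mul_ne v k hi]; exact hd i j

/-! ### Maximality of the reversal permutation -/

lemma card_val_lt {i : ℕ} (hi : i ≤ n) :
    (Finset.univ.filter fun x : Fin n => x.val < i).card = i := by
  induction i with
  | zero => simp
  | succ m ih =>
    have hm : m < n := hi
    have hins : (Finset.univ.filter fun x : Fin n => x.val < m + 1)
        = insert ⟨m, hm⟩ (Finset.univ.filter fun x : Fin n => x.val < m) := by
      ext x
      simp only [Finset.mem_filter, Finset.mem_insert, Finset.mem_univ, true_and, Fin.ext_iff]
      omega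
    rw [hins, Finset.card_insert_of_notMem (by simp), ih (by omega)]

lemma dom_rev_eq {u : Equiv.Perm (Fin n)}
    (hd : Dom (Fin.revPerm : Equiv.Perm (Fin n)) u) : u = Fin.revPerm := by
  have hpt : ∀ x : Fin n, n - 1 - x.val ≤ (u x).val := by
    intro x
    have hx := x.isLt
    set i := x.val + 1 with hidef
    have hi : i ≤ n := hx
    have h1 : rmat (Fin.revPerm : Equiv.Perm (Fin n)) i (n - i) = i := by
      unfold rmat
      have : (Finset.univ.filter fun y : Fin n =>
          y.val < i ∧ n - i ≤ ((Fin.revPerm : Equiv.Perm (Fin n)) y).val)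
          = Finset.univ.filter fun y : Fin n => y.val < i := by
        ext y
        have hy := y.isLt
        simp only [Finset.mem_filter, Finset.mem_univ, true_and, Fin.revPerm_apply, Fin.val_rev]
        omega
      rw [this, card_val_lt hi]
    have h2 := hd i (n - i)
    rw [h1] at h2
    have hsub : (Finset.univ.filter fun y : Fin n => y.val < i ∧ n - i ≤ (u y).val)
        ⊆ Finset.univ.filter fun y : Fin n => y.val < i := by
      intro y hy
      rw [Finset.mem_filter] at hy ⊢
      exact ⟨hy.1, hy.2.1⟩
    have heq := Finset.eq_of_subset_of_card_le hsub (by rw [card_val_lt hi]; exact h2)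
    have hxmem : x ∈ Finset.univ.filter fun y : Fin n => y.val < i := by
      simp [hidef]
    rw [← heq, Finset.mem_filter] at hxmem
    have := hxmem.2.2
    omega
  have hsum : ∑ x : Fin n, ((Fin.revPerm : Equiv.Perm (Fin n)) x).val = ∑ x : Fin n, (u x).val := by
    rw [Equiv.sum_comp (Fin.revPerm : Equiv.Perm (Fin n)) (fun y : Fin n => y.val),
      Equiv.sum_comp u (fun y : Fin n => y.val)]
  have hle : ∀ x ∈ Finset.univ, ((Fin.revPerm : Equiv.Perm (Fin n)) x).val ≤ (u x).val := by
    intro x _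
    simp only [Fin.revPerm_apply, Fin.val_rev]
    have := hpt x
    omega
  have hall := (Finset.sum_eq_sum_iff_of_le hle).1 hsum
  ext x
  have := (hall x (Finset.mem_univ x)).symm
  exact congrArg Fin.val (Fin.ext this : u x = Fin.revPerm x) ▸ this

/-! ### Length of identity and of the reversal -/

lemma permLength_one : permLength (1 : Equiv.Perm (Fin n)) = 0 := by
  rw [permLength, Finset.card_eq_zero]
  ext p
  simp only [Finset.mem_filter, Finset.mem_univ, true_and, Finset.notMem_empty, iff_false,
    not_and, Equiv.Perm.one_apply]
  exact fun h => asymm (Finset.mem_filter.1 h).2.1 (Finset.mem_filter.1 h).2.2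

lemma permLength_rev : permLength (Fin.revPerm : Equiv.Perm (Fin n)) = n * (n - 1) / 2 := by
  have hset : (Finset.univ.filter fun p : Fin n × Fin n =>
      p.1 < p.2 ∧ (Fin.revPerm : Equiv.Perm (Fin n)) p.2 < (Fin.revPerm : Equiv.Perm (Fin n)) p.1)
      = Finset.univ.filter fun p : Fin n × Fin n => p.1 < p.2 := by
    ext ⟨x, y⟩
    have hx := x.isLt; have hy := y.isLt
    simp only [Finset.mem_filter, Finset.mem_univ, true_and, Fin.revPerm_apply, Fin.lt_def,
      Fin.val_rev]
    omega
  rw [permLength, hset]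
  have hcount : (Finset.univ.filter fun p : Fin n × Fin n => p.1 < p.2).card
      = ∑ y : Fin n, y.val := by
    rw [Finset.card_filter, Fintype.sum_prod_type, Finset.sum_comm]
    refine Finset.sum_congr rfl fun y _ => ?_
    rw [← Finset.card_filter]
    have : (Finset.univ.filter fun x : Fin n => x < y)
        = Finset.univ.filter fun x : Fin n => x.val < y.val := by
      ext x
      simp only [Finset.mem_filter, Finset.mem_univ, true_and, Fin.lt_def]
    rw [this, card_val_lt (le_of_lt y.isLt)]
  rw [hcount]
  rw [Fin.sum_univ_eq_sum_range (fun i => i) n]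
  exact Finset.sum_range_id n

/-! ### The two main inductions -/

lemma foldl_concat (l : List (Fin (n-1))) (k : Fin (n-1)) :
    (l ++ [k]).foldl (demazureStep n) 1
      = demazureStep n (l.foldl (demazureStep n) 1) k := by
  rw [List.foldl_append]; rfl

lemma sublist_concat_cases {c l : List (Fin (n-1))} {k : Fin (n-1)}
    (hc : c.Sublist (l ++ [k])) :
    c.Sublist l ∨ ∃ c₀, c = c₀ ++ [k] ∧ c₀.Sublist l := by
  rw [List.sublist_append_iff] at hc
  obtain ⟨c₁, c₂, rfl, h1, h2⟩ := hc
  rcases List.sublist_singleton.1 h2 with rfl | rfl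
  · exact Or.inl (by simpa using h1)
  · exact Or.inr ⟨c₁, rfl, h1⟩

lemma value_trichotomy (v : Equiv.Perm (Fin n)) (k : Fin (n-1)) :
    v (posA k) < v (posB k) ∨ v (posB k) < v (posA k) := by
  rcases lt_trichotomy (v (posA k)) (v (posB k)) with h | h | h
  · exact Or.inl h
  · exact absurd h (apply_posA_ne_posB v k)
  · exact Or.inr h

/-- Main dominance lemma: the product over any subword is dominated by the Demazure fold. -/
lemma dom_prod_fold (l : List (Fin (n-1))) :
    ∀ c : List (Fin (n-1)), c.Sublist l →
      Dom ((c.map (adjTransposition n)).prod) (l.foldl (demazureStep n) 1) := by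
  induction l using List.reverseRecOn with
  | nil =>
    intro c hc
    rw [List.sublist_nil.mp hc]
    simp only [List.map_nil, List.prod_nil, List.foldl_nil]
    exact dom_refl 1
  | append_singleton t k ih =>
    intro c hc
    rw [foldl_concat]
    set w := t.foldl (demazureStep n) 1 with hw
    rw [demazureStep_eq]
    rcases sublist_concat_cases hc with hct | ⟨c₀, rfl, hc₀⟩
    · have hd := ih c hct
      split_ifs with h
      · exact dom_trans hd (dom_mul_of_asc k h)
      · exact hd
    · have hd := ih c₀ hc₀
      rw [List.map_append, List.prod_append]
      simp only [List.map_cons, List.map_nil, List.prod_cons, List.prod_nil, mul_one]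
      set v := (c₀.map (adjTransposition n)).prod with hv
      split_ifs with hwa
      · rcases value_trichotomy v k with hva | hvd
        · exact dom_mul_asc_asc k hd hva hwa
        · exact dom_trans (dom_mul_of_desc k hvd) (dom_trans hd (dom_mul_of_asc k hwa))
      · have hwd : w (posB k) < w (posA k) := by
          rcases value_trichotomy w k with h | h
          · exact absurd h hwa
          · exact h
        rcases value_trichotomy v k with hva | hvd
        · exact dom_lift k hd hva hwd
        · exact dom_trans (dom_mul_of_desc k hvd) hd

/-- Existence of a reduced subword realizing the Demazure fold. -/
lemma exists_subword (l : List (Fin (n-1))) :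
    ∃ c : List (Fin (n-1)), c.Sublist l ∧
      (c.map (adjTransposition n)).prod = l.foldl (demazureStep n) 1 ∧
      c.length = permLength (l.foldl (demazureStep n) 1) := by
  induction l using List.reverseRecOn with
  | nil =>
    exact ⟨[], List.Sublist.refl [], by simp, by simp [permLength_one]⟩
  | append_singleton t k ih =>
    obtain ⟨c, hcs, hcp, hcl⟩ := ih
    rw [foldl_concat, demazureStep_eq]
    split_ifs with h
    · refine ⟨c ++ [k], hcs.append (List.Sublist.refl [k]), ?_, ?_⟩
      · rw [List.map_append, List.prod_append, hcp]
        simp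
      · rw [List.length_append, hcl, permLength_mul_of_asc k h]
        simp
    · exact ⟨c, hcs.trans (List.sublist_append_left t [k]), hcp, hcl⟩

end Stmt14



/-- Folding the Demazure step over a word, starting from the identity, yields the
longest element `w₀` of `S_n` iff the word contains a reduced word for `w₀` as a
(not necessarily contiguous) subsequence. -/
theorem stmt14 (n : ℕ) (hn : 2 ≤ n) (l : List (Fin (n - 1))) :
    l.foldl (demazureStep n) 1 = (Fin.revPerm : Equiv.Perm (Fin n)) ↔
      ∃ l' : List (Fin (n - 1)), IsReducedWordW0 n l' ∧ l'.Sublist l := by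
  constructor
  · intro h
    obtain ⟨c, hcs, hcp, hcl⟩ := Stmt14.exists_subword l
    refine ⟨c, ⟨?_, ?_⟩, hcs⟩
    · rw [hcp, h]
    · rw [hcl, h, Stmt14.permLength_rev]
  · rintro ⟨l', ⟨hp, -⟩, hs⟩
    have hd := Stmt14.dom_prod_fold l l' hs
    rw [hp] at hd
    exact Stmt14.dom_rev_eq hd
end
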